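/- Let π and π' be valid functions with π' ≤ π pointwise. Then P(π) ⊆ P(π'). If moreover π' is minimal valid and π(x₀) > π'(x₀) for some x₀ ∈ ℝ, then P(π) ≠ P(π') (so the inclusion is strict). -/

import Mathlib

/-- A finite-support function `y : ℝ → ℕ` is feasible if `∑ r, r·y(r) − f ∈ ℤ`. -/
def Feasible (f : ℝ) (y : ℝ →₀ ℕ) : Prop :=
  ∃ z : ℤ, (∑ r ∈ y.support, r * (y r : ℝ)) - f = (z : ℝ)

/-- `π` is a valid function: nonnegative, and `∑ r, π(r)·y(r) ≥ 1` for every feasible `y`. -/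
def Valid (f : ℝ) (π : ℝ → ℝ) : Prop :=
  (∀ x, 0 ≤ π x) ∧
    ∀ y : ℝ →₀ ℕ, Feasible f y → 1 ≤ ∑ r ∈ y.support, π r * (y r : ℝ)

/-- A valid function is minimal if no other valid function is pointwise ≤ it. -/
def MinimalValid (f : ℝ) (π : ℝ → ℝ) : Prop :=
  Valid f π ∧ ¬ ∃ π' : ℝ → ℝ, Valid f π' ∧ (∀ x, π' x ≤ π x) ∧ π' ≠ π

/-- `P(π)`: the set of feasible `y` with `∑ r, π(r)·y(r) = 1`. -/
def Pset (f : ℝ) (π : ℝ → ℝ) : Set (ℝ →₀ ℕ) :=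
  {y | Feasible f y ∧ ∑ r ∈ y.support, π r * (y r : ℝ) = 1}

/-- `E(π) = {(x,y) : π(x) + π(y) = π(x+y)}`. -/
def Eset (π : ℝ → ℝ) : Set (ℝ × ℝ) :=
  {p | π p.1 + π p.2 = π (p.1 + p.2)}

/-- A valid function `π` is a facet if every valid `π'` with `P(π) ⊆ P(π')` equals `π`. -/
def IsFacet (f : ℝ) (π : ℝ → ℝ) : Prop :=
  Valid f π ∧ ∀ π' : ℝ → ℝ, Valid f π' → Pset f π ⊆ Pset f π' → π' = π

/-- A valid function `π` is a weak facet if every valid `π'` with `P(π) ⊆ P(π')`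
has `P(π) = P(π')`. -/
def IsWeakFacet (f : ℝ) (π : ℝ → ℝ) : Prop :=
  Valid f π ∧ ∀ π' : ℝ → ℝ, Valid f π' → Pset f π ⊆ Pset f π' → Pset f π = Pset f π'

/-- A valid function `π` is extreme if whenever `π = (π¹ + π²)/2` with `π¹, π²` valid,
then `π¹ = π² = π`. -/
def ExtremeFunc (f : ℝ) (π : ℝ → ℝ) : Prop :=
  Valid f π ∧ ∀ π₁ π₂ : ℝ → ℝ, Valid f π₁ → Valid f π₂ →
    (∀ x, π x = (π₁ x + π₂ x) / 2) → π₁ = π ∧ π₂ = π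

/-- `π` is piecewise linear: there is a closed, discrete set `B ⊆ ℝ` of breakpoints
such that `π` is affine on each connected component of `ℝ \ B`. -/
def PiecewiseLinear (π : ℝ → ℝ) : Prop :=
  ∃ B : Set ℝ, IsClosed B ∧
    (∀ x ∈ B, ∃ ε > (0 : ℝ), ∀ y ∈ B, |y - x| < ε → y = x) ∧
    (∀ x ∉ B, ∃ a b : ℝ, ∀ z ∈ connectedComponentIn Bᶜ x, π z = a * z + b)

/-- `π` is continuous piecewise linear. -/
def ContPiecewiseLinear (π : ℝ → ℝ) : Prop :=
  PiecewiseLinear π ∧ Continuous π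

/-!
The inclusion holds because `1 ≤ π'·y ≤ π·y` for feasible `y`. For strictness, a minimal valid `π'`
is symmetric: `π'(x) + π'(f - x) = 1` (Gomory–Johnson). Then the two-point solution
`e_{x₀} + e_{f - x₀}` has `π'`-weight `1` but `π`-weight `> 1`.

All properties of minimal functions come from one principle: if lowering `π` at a single point `s`
to `v ≥ 0` keeps the validity inequality on every feasible `y` with `y s ≠ 0`, then `π s ≤ v`.
Lowering to `1`, to `0` at integers, and to `π a + π b` at `a + b` gives `π ≤ 1`, `π(ℤ) = 0` and
subadditivity. If `π x + π (f - x) = 1 + δ` with `δ > 0`, subadditivity shows that every feasible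
`y` through `u = f - x` has weight at least `1 + δ`, and also at least `y u · π u ≥ y u · δ`; so `π`
can be lowered at `u` by `δ² / 2`, a contradiction.
-/

open Function
open Finsupp (single erase_add_single single_le_iff sum_add_index'
  sum_single_index toMultiset_add toMultiset_single)

noncomputable def weight (π : ℝ → ℝ) (y : ℝ →₀ ℕ) : ℝ :=
  y.sum fun r n => π r * n

section weight

variable (π : ℝ → ℝ)

theorem weight_add (y₁ y₂ : ℝ →₀ ℕ) : weight π (y₁ + y₂) = weight π y₁ + weight π y₂ :=
  sum_add_index' (fun _ => by simp) fun _ _ _ => by push_cast; ring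

theorem weight_single (a : ℝ) (n : ℕ) : weight π (single a n) = π a * n :=
  sum_single_index (by simp)

theorem weight_erase_add (y : ℝ →₀ ℕ) (s : ℝ) :
    weight π y = weight π (y.erase s) + π s * y s := by
  conv_lhs => rw [← erase_add_single s y]
  rw [weight_add, weight_single]

theorem weight_update (y : ℝ →₀ ℕ) (s v : ℝ) :
    weight (update π s v) y = weight π (y.erase s) + v * y s := by
  rw [weight_erase_add _ y s, update_self]
  congr 1
  refine Finset.sum_congr rfl fun r hr => ?_
  dsimp only
  rw [update_of_ne]
  rintro rfl
  simp at hr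

theorem weight_eq_sum_map_toMultiset (y : ℝ →₀ ℕ) : weight π y = (y.toMultiset.map π).sum := by
  induction y using Finsupp.induction with
  | zero => simp [weight]
  | single_add a n y _ _ ih =>
    rw [weight_add, weight_single, ih, toMultiset_add, Multiset.map_add, Multiset.sum_add,
      toMultiset_single, Multiset.map_nsmul, Multiset.sum_nsmul, Multiset.map_singleton,
      Multiset.sum_singleton, nsmul_eq_mul, mul_comm]

theorem apply_weight_id_le_weight (h0 : π 0 = 0) (hadd : ∀ a b, π (a + b) ≤ π a + π b)
    (y : ℝ →₀ ℕ) : π (weight id y) ≤ weight π y := by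
  simpa [weight_eq_sum_map_toMultiset] using
    Multiset.le_sum_of_subadditive π h0.le hadd y.toMultiset

end weight

theorem weight_nonneg {π : ℝ → ℝ} (hπ : ∀ x, 0 ≤ π x) (y : ℝ →₀ ℕ) : 0 ≤ weight π y :=
  Finset.sum_nonneg fun r _ => mul_nonneg (hπ r) (Nat.cast_nonneg _)

theorem weight_mono {π ρ : ℝ → ℝ} (h : ∀ x, ρ x ≤ π x) (y : ℝ →₀ ℕ) : weight ρ y ≤ weight π y :=
  Finset.sum_le_sum fun r _ => mul_le_mul_of_nonneg_right (h r) (Nat.cast_nonneg _)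

theorem feasible_iff {f : ℝ} {y : ℝ →₀ ℕ} : Feasible f y ↔ ∃ z : ℤ, weight id y - f = z :=
  Iff.rfl

theorem Feasible.of_weight_id_eq_add {f : ℝ} {y y' : ℝ →₀ ℕ} (hy : Feasible f y) (m : ℤ)
    (h : weight id y' = weight id y + m) : Feasible f y' := by
  obtain ⟨z, hz⟩ := feasible_iff.1 hy
  exact feasible_iff.2 ⟨z + m, by push_cast; rw [h]; linarith⟩

theorem feasible_pair (f x : ℝ) : Feasible f (single x 1 + single (f - x) 1) :=
  feasible_iff.2 ⟨0, by rw [weight_add, weight_single, weight_single]; simp⟩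

theorem weight_pair (π : ℝ → ℝ) (f x : ℝ) :
    weight π (single x 1 + single (f - x) 1) = π x + π (f - x) := by
  simp [weight_add, weight_single]

theorem Valid.one_le_apply_add_apply_sub {f : ℝ} {π : ℝ → ℝ} (h : Valid f π) (x : ℝ) :
    1 ≤ π x + π (f - x) :=
  weight_pair π f x ▸ h.2 _ (feasible_pair f x)

namespace MinimalValid

variable {f : ℝ} {π : ℝ → ℝ}

theorem apply_le_of_update (h : MinimalValid f π) {s v : ℝ} (hv : 0 ≤ v)
    (hupd : ∀ y, Feasible f y → y s ≠ 0 → 1 ≤ weight (update π s v) y) : π s ≤ v := by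
  by_contra! hlt
  have hnonneg : ∀ x, 0 ≤ update π s v x :=
    (le_update_iff.2 ⟨hv, fun j _ => h.1.1 j⟩ : (0 : ℝ → ℝ) ≤ update π s v)
  have hvalid : Valid f (update π s v) := by
    refine ⟨hnonneg, fun y hy => ?_⟩
    by_cases hys : y s = 0
    · have hπy : 1 ≤ weight π y := h.1.2 y hy
      change 1 ≤ weight (update π s v) y
      rw [weight_erase_add π y s] at hπy
      rw [weight_update]
      simpa [hys] using hπy
    · exact hupd y hy hys
  have hle : ∀ x, update π s v x ≤ π x :=
    (update_le_iff.2 ⟨hlt.le, fun _ _ => le_rfl⟩ : update π s v ≤ π)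
  exact h.2 ⟨_, hvalid, hle, fun heq => hlt.ne (by simpa using congrFun heq s)⟩

theorem le_one (h : MinimalValid f π) (s : ℝ) : π s ≤ 1 :=
  h.apply_le_of_update zero_le_one fun y _ hys => by
    have hys : (1 : ℝ) ≤ y s := by exact_mod_cast Nat.one_le_iff_ne_zero.2 hys
    rw [weight_update]
    linarith [weight_nonneg h.1.1 (y.erase s)]

theorem apply_intCast (h : MinimalValid f π) (m : ℤ) : π m = 0 := by
  refine le_antisymm (h.apply_le_of_update le_rfl fun y hy _ => ?_) (h.1.1 m)
  rw [weight_update, zero_mul, add_zero]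
  refine h.1.2 _ (hy.of_weight_id_eq_add (-(m * y m)) ?_)
  rw [weight_erase_add id y m]
  push_cast
  simp

theorem apply_add_le (h : MinimalValid f π) (a b : ℝ) : π (a + b) ≤ π a + π b := by
  refine h.apply_le_of_update (add_nonneg (h.1.1 a) (h.1.1 b)) fun y hy _ => ?_
  set k := y (a + b)
  have hsplit : weight (update π (a + b) (π a + π b)) y =
      weight π (y.erase (a + b) + single a k + single b k) := by
    rw [weight_update, weight_add, weight_add, weight_single, weight_single]
    ring
  rw [hsplit]
  refine h.1.2 _ (hy.of_weight_id_eq_add 0 ?_)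
  rw [weight_erase_add id y (a + b), weight_add, weight_add, weight_single, weight_single]
  simp only [id, Int.cast_zero]
  ring

theorem apply_add_intCast (h : MinimalValid f π) (x : ℝ) (m : ℤ) : π (x + m) = π x := by
  refine le_antisymm (by simpa [h.apply_intCast] using h.apply_add_le x m) ?_
  have := h.apply_add_le (x + m) ((-m : ℤ) : ℝ)
  rwa [h.apply_intCast, add_zero, Int.cast_neg, add_neg_cancel_right] at this

theorem apply_sub_add_apply_le_weight (h : MinimalValid f π) {y : ℝ →₀ ℕ} (hy : Feasible f y)
    {u : ℝ} (hu : y u ≠ 0) : π (f - u) + π u ≤ weight π y := by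
  obtain ⟨z, hz⟩ := feasible_iff.1 hy
  have hy' : y - single u 1 + single u 1 = y :=
    tsub_add_cancel_of_le (single_le_iff.2 (Nat.one_le_iff_ne_zero.2 hu))
  have hw : weight id (y - single u 1) = f - u + z := by
    have := congrArg (weight id) hy'
    rw [weight_add, weight_single] at this
    simp only [id, Nat.cast_one, mul_one] at this
    linarith
  calc π (f - u) + π u = π (weight id (y - single u 1)) + π u := by
        rw [hw, h.apply_add_intCast]
    _ ≤ weight π (y - single u 1) + π u := by
        gcongr
        exact apply_weight_id_le_weight π (by simpa using h.apply_intCast 0) h.apply_add_le _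
    _ = weight π y := by
        conv_rhs => rw [← hy']
        rw [weight_add, weight_single, Nat.cast_one, mul_one]

theorem apply_add_apply_sub (h : MinimalValid f π) (x : ℝ) : π x + π (f - x) = 1 := by
  refine le_antisymm ?_ (h.1.one_le_apply_add_apply_sub x)
  by_contra! hgt
  set u := f - x
  set δ := π x + π u - 1
  have hδ : 0 < δ := by linarith
  have hδu : δ ≤ π u := by linarith [h.le_one x]
  have hδ1 : δ ≤ 1 := hδu.trans (h.le_one u)
  have hlower : π u ≤ π u - δ ^ 2 / 2 := h.apply_le_of_update (by nlinarith) fun y hy hyu => by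
    have hK : (1 : ℝ) ≤ y u := by exact_mod_cast Nat.one_le_iff_ne_zero.2 hyu
    have hthrough := h.apply_sub_add_apply_le_weight hy hyu
    rw [sub_sub_cancel] at hthrough
    have hsplit := weight_erase_add π y u
    have hrest := weight_nonneg h.1.1 (y.erase u)
    rw [weight_update]
    -- few copies of `u`: the bound `1 + δ` absorbs the loss; many: `π u ≥ δ` alone suffices
    by_cases hfew : y u * δ ≤ 2
    · nlinarith
    · nlinarith
  nlinarith

end MinimalValid

theorem Pset_subset_Pset_of_le {f : ℝ} {π ρ : ℝ → ℝ} (hρ : Valid f ρ) (hle : ∀ x, ρ x ≤ π x) :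
    Pset f π ⊆ Pset f ρ :=
  fun y ⟨hy, hπy⟩ => ⟨hy, le_antisymm (hπy ▸ weight_mono hle y) (hρ.2 y hy)⟩

theorem Pset_ne_Pset_of_lt {f : ℝ} {π ρ : ℝ → ℝ} (hρ : MinimalValid f ρ)
    (hle : ∀ x, ρ x ≤ π x) {x₀ : ℝ} (hlt : ρ x₀ < π x₀) : Pset f π ≠ Pset f ρ := by
  intro heq
  have hmem : single x₀ 1 + single (f - x₀) 1 ∈ Pset f ρ :=
    ⟨feasible_pair f x₀, (weight_pair ρ f x₀).trans (hρ.apply_add_apply_sub x₀)⟩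
  have hπ : weight π (single x₀ 1 + single (f - x₀) 1) = 1 := (heq ▸ hmem).2
  rw [weight_pair] at hπ
  linarith [hle (f - x₀), hρ.apply_add_apply_sub x₀]

theorem stmt13_general (f : ℝ) (π π' : ℝ → ℝ)
    (hπ' : Valid f π') (hle : ∀ x, π' x ≤ π x) :
    Pset f π ⊆ Pset f π' ∧
      (MinimalValid f π' → (∃ x₀ : ℝ, π' x₀ < π x₀) → Pset f π ≠ Pset f π') :=
  ⟨Pset_subset_Pset_of_le hπ' hle, fun hmin ⟨_, hx₀⟩ => Pset_ne_Pset_of_lt hmin hle hx₀⟩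

theorem stmt13 (f : ℝ) (hf : f ∈ Set.Ioo (0 : ℝ) 1) (π π' : ℝ → ℝ)
    (hπ : Valid f π) (hπ' : Valid f π') (hle : ∀ x, π' x ≤ π x) :
    Pset f π ⊆ Pset f π' ∧
      (MinimalValid f π' → (∃ x₀ : ℝ, π' x₀ < π x₀) → Pset f π ≠ Pset f π') :=
  stmt13_general f π π' hπ' hle
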